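/- In the Tower of Hanoi system, for each configuration x : Fin n → Fin 3, the completed rewrite system reaches the all-ones normal form: x M* c where c is the constant configuration with every disk on peg 0; consequently any two configurations are joinable (rewrite to a common configuration) under M*. -/

import Mathlib

/-!
To put every disk on peg `t`, settle the disks from the largest one (index `0`) down to the
smallest one. If disk `k` is not yet on `t`, first stack all smaller disks on the third peg `q`
(by induction), then move disk `k` to `t`, and finally stack the smaller disks on `t` (by
induction again).
-/

open Relation

variable {n : ℕ}

def HanoiMove (x y : Fin n → Fin 3) : Prop :=
  ∃ (i : Fin n) (p q r : Fin 3), p ≠ q ∧ q ≠ r ∧ p ≠ r ∧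
    x i = p ∧ y i = r ∧ (∀ j ≠ i, x j = y j) ∧ (∀ j, i < j → x j = q)

def stackFrom (k : ℕ) (t : Fin 3) (x : Fin n → Fin 3) : Fin n → Fin 3 :=
  fun j => if (j : ℕ) < k then x j else t

lemma exists_third_peg {p t : Fin 3} (h : p ≠ t) : ∃ q, q ≠ p ∧ q ≠ t := by
  revert p t; decide

lemma hanoiMove_update {x : Fin n → Fin 3} {i : Fin n} {q t : Fin 3}
    (hxt : x i ≠ t) (hqx : q ≠ x i) (hqt : q ≠ t) (hsmaller : ∀ j, i < j → x j = q) :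
    HanoiMove x (Function.update x i t) :=
  ⟨i, x i, q, t, hqx.symm, hqt, hxt, rfl, by simp,
    fun j hj => (Function.update_of_ne hj t x).symm, hsmaller⟩

lemma stackFrom_of_le {k : ℕ} (hk : n ≤ k) (t : Fin 3) (x : Fin n → Fin 3) :
    stackFrom k t x = x :=
  funext fun j => if_pos (by omega)

lemma stackFrom_succ_of_eq {k : ℕ} {t : Fin 3} {x : Fin n → Fin 3} {i : Fin n}
    (hi : (i : ℕ) = k) (hxi : x i = t) : stackFrom (k + 1) t x = stackFrom k t x := by
  funext j
  by_cases hj : j = i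
  · subst hj; simp [stackFrom, hi, hxi]
  · have : (j : ℕ) ≠ k := fun h => hj (Fin.ext (h.trans hi.symm))
    simp only [stackFrom]
    split_ifs <;> first | rfl | omega

lemma stackFrom_update_stackFrom {k : ℕ} {q t : Fin 3} {x : Fin n → Fin 3} {i : Fin n}
    (hi : (i : ℕ) = k) :
    stackFrom (k + 1) t (Function.update (stackFrom (k + 1) q x) i t) = stackFrom k t x := by
  funext j
  by_cases hj : j = i
  · subst hj; simp [stackFrom, hi]
  · have : (j : ℕ) ≠ k := fun h => hj (Fin.ext (h.trans hi.symm))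
    simp only [stackFrom, Function.update_of_ne hj]
    split_ifs <;> first | rfl | omega

theorem reflTransGen_stackFrom {k : ℕ} (hk : k ≤ n) (t : Fin 3) (x : Fin n → Fin 3) :
    ReflTransGen HanoiMove x (stackFrom k t x) := by
  induction hk using Nat.decreasingInduction generalizing x t with
  | self => rw [stackFrom_of_le le_rfl]
  | of_succ k hk ih =>
    set i : Fin n := ⟨k, hk⟩
    by_cases hxt : x i = t
    · rw [← stackFrom_succ_of_eq rfl hxt]
      exact ih t x
    obtain ⟨q, hqx, hqt⟩ := exists_third_peg hxt
    set y := stackFrom (k + 1) q x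
    have hyi : y i = x i := if_pos (Nat.lt_succ_self k)
    have hmove : HanoiMove y (Function.update y i t) :=
      hanoiMove_update (hyi ▸ hxt) (hyi ▸ hqx) hqt
        fun j hj => if_neg (by simpa [i, Fin.lt_def] using hj)
    rw [← stackFrom_update_stackFrom (q := q) (i := i) rfl]
    exact ((ih q x).tail hmove).trans (ih t _)

theorem stmt_10 (n : ℕ) (M : (Fin n → Fin 3) → (Fin n → Fin 3) → Prop)
    (hM : ∀ x y, M x y ↔ ∃ (i : Fin n) (p q r : Fin 3),
      p ≠ q ∧ q ≠ r ∧ p ≠ r ∧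
      x i = p ∧ y i = r ∧ (∀ j ≠ i, x j = y j) ∧ (∀ j, i < j → x j = q)) :
    (∀ x : Fin n → Fin 3, Relation.ReflTransGen M x (fun _ => 0)) ∧
    (∀ x y : Fin n → Fin 3,
      ∃ u, Relation.ReflTransGen M x u ∧ Relation.ReflTransGen M y u) := by
  obtain rfl : M = HanoiMove := funext₂ fun x y => propext (hM x y)
  have hzero (x : Fin n → Fin 3) : ReflTransGen HanoiMove x (fun _ => 0) :=
    reflTransGen_stackFrom (Nat.zero_le n) 0 x
  exact ⟨hzero, fun x y => ⟨_, hzero x, hzero y⟩⟩
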